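/- arXiv:1109.3954 — 2 statements merged into one kernel-verified Lean document; each statement's English description precedes it below -/
import Mathlib

section
/- In the (non-self-referential) LZ77 parse of a string S, every occurrence of a pattern P in S that does not cross a phrase boundary (a secondary occurrence) is contained in a phrase whose source contains an earlier occurrence of P; consequently, the leftmost occurrence of P in S crosses a phrase boundary (is primary). -/
/-- `P` occurs in `S` starting at (0-indexed) position `i`. -/
def occursAt {α : Type*} (S P : List α) (i : ℕ) : Prop :=
  i + P.length ≤ S.length ∧ (S.drop i).take P.length = P

/-- Position in `S` where the `t`-th phrase of the parse `bs` begins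
(equivalently, where the `(t-1)`-st phrase ends). -/
def phraseEnd {α : Type*} (bs : List (List α)) (t : ℕ) : ℕ :=
  ((bs.take t).flatten).length

/-- `bs` is the (greedy, non-self-referential) LZ77 parse of `S`:
the phrases concatenate to `S`, each phrase is nonempty, each phrase minus its
last character has an occurrence ending at or before the phrase's start
(or the phrase is a single character), and greediness: unless the phrase reaches
the end of `S`, the whole phrase has no occurrence ending at or before its start. -/
def LZ77Parse {α : Type*} (S : List α) (bs : List (List α)) : Prop :=
  bs.flatten = S ∧ (∀ b ∈ bs, b ≠ []) ∧
  ∀ (t : ℕ) (ht : t < bs.length),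
    ((bs.get ⟨t, ht⟩).length = 1 ∨
      ∃ j, occursAt S (bs.get ⟨t, ht⟩).dropLast j ∧
        j + (bs.get ⟨t, ht⟩).dropLast.length ≤ phraseEnd bs t ∧ j < phraseEnd bs t) ∧
    (phraseEnd bs t + (bs.get ⟨t, ht⟩).length = S.length ∨
      ¬ ∃ j, occursAt S (bs.get ⟨t, ht⟩) j ∧
          j + (bs.get ⟨t, ht⟩).length ≤ phraseEnd bs t)

/-- An occurrence of a length-`m` pattern at position `i` is primary if it contains
the last position of some phrase, i.e. crosses a phrase boundary. -/
def PrimaryOcc {α : Type*} (bs : List (List α)) (i m : ℕ) : Prop :=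
  ∃ t < bs.length, i < phraseEnd bs (t + 1) ∧ phraseEnd bs (t + 1) ≤ i + m

/-! A secondary occurrence of `P` lies inside one phrase and misses its last character, so it
lies in the part of the phrase that was copied from the phrase's source. The source occurs
strictly earlier, so `P` does as well; in particular the leftmost occurrence is primary. -/

namespace occursAt

variable {α : Type*} {S Q P : List α} {i j k : ℕ}

theorem take_drop_eq (hQ : occursAt S Q j) {m : ℕ} (hkm : k + m ≤ Q.length) :
    (Q.drop k).take m = (S.drop (j + k)).take m := by
  conv_lhs => rw [← hQ.2]
  rw [List.drop_take, List.take_take, List.drop_drop, Nat.min_eq_left (by omega)]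

theorem trans (hQ : occursAt S Q j) (hP : occursAt Q P k) : occursAt S P (j + k) :=
  ⟨by have := hQ.1; have := hP.1; omega, by rw [← hQ.take_drop_eq hP.1, hP.2]⟩

theorem take (hQ : occursAt S Q j) (n : ℕ) : occursAt S (Q.take n) j := by
  rw [List.take_eq_take_min]
  refine ⟨by simp only [List.length_take]; have := hQ.1; omega, ?_⟩
  simpa using (hQ.take_drop_eq (k := 0) (m := min n Q.length) (by omega)).symm

/-- An occurrence of `P` inside an occurrence of `Q` is copied to every other occurrence of `Q`. -/
theorem shift (hQ : occursAt S Q i) (hQ' : occursAt S Q j) (hP : occursAt S P (i + k))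
    (hk : k + P.length ≤ Q.length) : occursAt S P (j + k) :=
  hQ'.trans ⟨hk, by rw [hQ.take_drop_eq hk, hP.2]⟩

end occursAt

theorem occursAt_append_middle {α : Type*} (A P B : List α) :
    occursAt (A ++ P ++ B) P A.length :=
  ⟨by simp, by simp⟩

section phrases

variable {α : Type*} (bs : List (List α))

theorem flatten_eq_phrase_append {t : ℕ} (ht : t < bs.length) :
    bs.flatten = (bs.take t).flatten ++ bs[t] ++ (bs.drop (t + 1)).flatten := by
  conv_lhs => rw [← List.take_append_drop t bs, List.drop_eq_getElem_cons ht]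
  rw [List.flatten_append, List.flatten_cons, List.append_assoc]

theorem occursAt_flatten_phraseEnd {t : ℕ} (ht : t < bs.length) :
    occursAt bs.flatten bs[t] (phraseEnd bs t) := by
  rw [flatten_eq_phrase_append bs ht]
  exact occursAt_append_middle _ _ _

theorem phraseEnd_succ {t : ℕ} (ht : t < bs.length) :
    phraseEnd bs (t + 1) = phraseEnd bs t + bs[t].length := by
  simp only [phraseEnd, List.take_add_one, List.getElem?_eq_getElem ht, Option.toList_some,
    List.flatten_append, List.length_append, List.flatten_singleton]

theorem phraseEnd_of_length_le {t : ℕ} (ht : bs.length ≤ t) :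
    phraseEnd bs t = bs.flatten.length := by
  simp [phraseEnd, List.take_of_length_le ht]

theorem exists_phraseEnd_le_lt {i : ℕ} (hi : i < bs.flatten.length) :
    ∃ t < bs.length, phraseEnd bs t ≤ i ∧ i < phraseEnd bs (t + 1) := by
  classical
  have hex : ∃ t, i < phraseEnd bs (t + 1) :=
    ⟨bs.length, by rwa [phraseEnd_of_length_le bs (by omega)]⟩
  have hstart : phraseEnd bs (Nat.find hex) ≤ i := by
    rcases Nat.eq_zero_or_eq_succ_pred (Nat.find hex) with h0 | hpred
    · rw [h0]
      simp [phraseEnd]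
    · rw [hpred]
      exact not_lt.mp (Nat.find_min hex (by omega))
  refine ⟨Nat.find hex, ?_, hstart, Nat.find_spec hex⟩
  by_contra! hlen
  rw [phraseEnd_of_length_le bs hlen] at hstart
  omega

end phrases

theorem LZ77Parse.exists_occursAt_lt {α : Type*} {S : List α} {bs : List (List α)}
    (h : LZ77Parse S bs) {P : List α} (hP : P ≠ []) {i t : ℕ} (hi : occursAt S P i)
    (ht : t < bs.length) (hstart : phraseEnd bs t ≤ i)
    (hend : i + P.length < phraseEnd bs (t + 1)) :
    ∃ j < i, occursAt S P j := by
  obtain ⟨hS, -, hLZ⟩ := h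
  have hlen := phraseEnd_succ bs ht
  have hPlen : 0 < P.length := List.length_pos_iff.mpr hP
  rcases (hLZ t ht).1 with hone | ⟨j, hsrc, -, hj⟩
  · simp only [List.get_eq_getElem] at hone
    omega
  · simp only [List.get_eq_getElem] at hsrc
    -- the source `j` occurs before phrase `t`, and `P` sits at offset `i - phraseEnd bs t` in it
    have hcopy : occursAt S bs[t].dropLast (phraseEnd bs t) := by
      rw [List.dropLast_eq_take, ← hS]
      exact (occursAt_flatten_phraseEnd bs ht).take _
    refine ⟨j + (i - phraseEnd bs t), by omega, hcopy.shift hsrc ?_ ?_⟩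
    · rwa [Nat.add_sub_cancel' hstart]
    · rw [List.length_dropLast]
      omega

/-- In the LZ77 parse, every non-primary (secondary) occurrence of a nonempty
pattern `P` is contained in a phrase and has a strictly earlier occurrence
(copied from the phrase's source); consequently, the leftmost occurrence of `P`
in `S` is primary (crosses a phrase boundary). -/
theorem secondary_has_earlier_and_leftmost_primary {α : Type*} (S : List α)
    (bs : List (List α)) (h : LZ77Parse S bs) (P : List α) (hP : P ≠ []) :
    (∀ i, occursAt S P i → ¬ PrimaryOcc bs i P.length →
      ∃ t < bs.length, phraseEnd bs t ≤ i ∧ i + P.length ≤ phraseEnd bs (t + 1) ∧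
        ∃ j < i, occursAt S P j) ∧
    (∀ i, occursAt S P i → (∀ j, occursAt S P j → i ≤ j) →
      PrimaryOcc bs i P.length) := by
  have secondary : ∀ i, occursAt S P i → ¬ PrimaryOcc bs i P.length →
      ∃ t < bs.length, phraseEnd bs t ≤ i ∧ i + P.length ≤ phraseEnd bs (t + 1) ∧
        ∃ j < i, occursAt S P j := by
    intro i hi hsec
    have hiS : i < bs.flatten.length := by
      rw [h.1]
      have := hi.1
      have := List.length_pos_iff.mpr hP
      omega
    obtain ⟨t, ht, hstart, hlt⟩ := exists_phraseEnd_le_lt bs hiS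
    have hend : i + P.length < phraseEnd bs (t + 1) := by
      by_contra! hle
      exact hsec ⟨t, ht, hlt, hle⟩
    exact ⟨t, ht, hstart, hend.le, h.exists_occursAt_lt hP hi ht hstart hend⟩
  refine ⟨secondary, fun i hi hleftmost => ?_⟩
  by_contra hsec
  obtain ⟨-, -, -, -, j, hji, hj⟩ := secondary i hi hsec
  exact absurd (hleftmost j hj) (by omega)
end

section
/- Any straight-line program (SLP) generating a string S must have at least z rules, where z is the number of phrases in the LZ77 parse of S. -/
/-- A straight-line program: `r` rules (one per nonterminal), each either
`X_i → X_j X_k` with `j, k < i`, or `X_i → a` for a terminal `a`. -/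
structure SLP (α : Type*) where
  r : ℕ
  rhs : Fin r → (Fin r × Fin r) ⊕ α
  wf : ∀ i j k, rhs i = Sum.inl (j, k) → j < i ∧ k < i

/-- The expansion of a nonterminal: the unique string it derives. -/
def SLP.exp {α : Type*} (G : SLP α) (i : Fin G.r) : List α :=
  match h : G.rhs i with
  | Sum.inr a => [a]
  | Sum.inl (j, k) => G.exp j ++ G.exp k
termination_by i.1
decreasing_by
  · exact (G.wf i j k h).1
  · exact (G.wf i j k h).2

/-!
Walk the derivation tree of the start symbol from left to right, expanding a binary nonterminal
only at its first visit and emitting its whole expansion as a single phrase at every later visit.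
The leaves form a factorization of `S` in which each phrase is one character or a copy of text
lying entirely to its left, and it has at most one phrase more than there are binary
nonterminals; since rule `0` is terminal this is at most `r`. The greedy LZ77 parse has no more
phrases than any such factorization: its phrase boundaries never fall behind those of the other
factorization, for otherwise some LZ77 phrase would sit strictly inside a copied phrase, hence
occur earlier in full, contradicting greediness.
-/

section

variable {α : Type*}

lemma List.flatten_take_add_one {L : List (List α)} {t : ℕ} (ht : t < L.length) :
    (L.take (t + 1)).flatten = (L.take t).flatten ++ L[t] := by
  rw [List.take_add_one, List.getElem?_eq_getElem ht, List.flatten_append]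
  simp

lemma List.infix_of_append_prefix_append {A B b f : List α} (hAB : A <+: B)
    (h : B ++ b <+: A ++ f) (hlt : (B ++ b).length < (A ++ f).length) :
    b <:+: f ∧ b.length < f.length := by
  obtain ⟨u, rfl⟩ := hAB
  obtain ⟨rest, hrest⟩ := h
  simp only [List.append_assoc, List.append_cancel_left_eq] at hrest
  exact ⟨⟨u, rest, by simp [← hrest]⟩, by simp at hlt; omega⟩

lemma exists_occursAt_of_infix_of_prefix {S P B : List α} (hP : P <:+: B) (hB : B <+: S) :
    ∃ j, occursAt S P j ∧ j + P.length ≤ B.length := by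
  obtain ⟨s, u, rfl⟩ := hP
  obtain ⟨w, rfl⟩ := hB
  exact ⟨s.length, ⟨by simp, by simp⟩, by simp⟩

/-- Each phrase of `F` is a single character or a copy of text to its left, counting the text
`pre` emitted before `F`. -/
def IsCopyParse : List α → List (List α) → Prop
  | _, [] => True
  | pre, b :: F => (b.length = 1 ∨ b <:+: pre) ∧ IsCopyParse (pre ++ b) F

section IsCopyParse

variable {pre : List α} {F F₁ F₂ : List (List α)}

@[simp]
lemma isCopyParse_nil (pre : List α) : IsCopyParse pre ([] : List (List α)) := trivial

@[simp]
lemma isCopyParse_cons {b : List α} :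
    IsCopyParse pre (b :: F) ↔ (b.length = 1 ∨ b <:+: pre) ∧ IsCopyParse (pre ++ b) F :=
  Iff.rfl

lemma isCopyParse_append :
    IsCopyParse pre (F₁ ++ F₂) ↔ IsCopyParse pre F₁ ∧ IsCopyParse (pre ++ F₁.flatten) F₂ := by
  induction F₁ generalizing pre with
  | nil => simp
  | cons b F₁ ih => simp [ih, and_assoc]

lemma IsCopyParse.getElem (hF : IsCopyParse pre F) {t : ℕ} (ht : t < F.length) :
    F[t].length = 1 ∨ F[t] <:+: pre ++ (F.take t).flatten := by
  induction F generalizing pre t with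
  | nil => simp at ht
  | cons b F ih =>
    cases t with
    | zero => simpa using hF.1
    | succ t => simpa using ih hF.2 (Nat.lt_of_succ_lt_succ ht)

end IsCopyParse

namespace LZ77Parse

variable {S : List α} {bs : List (List α)}

lemma flatten_take_prefix (h : LZ77Parse S bs) (t : ℕ) : (bs.take t).flatten <+: S :=
  h.1 ▸ (bs.take_prefix t).flatten

lemma greedy (h : LZ77Parse S bs) {t : ℕ} (ht : t < bs.length) :
    ((bs.take t).flatten ++ bs[t]).length = S.length ∨ ¬ bs[t] <:+: (bs.take t).flatten := by
  refine (h.2.2 t ht).2.imp (fun hend => ?_) fun hnew hcopy => hnew ?_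
  · simpa [phraseEnd] using hend
  · exact exists_occursAt_of_infix_of_prefix hcopy (h.flatten_take_prefix t)

lemma length_flatten_take_le_of_isCopyParse (h : LZ77Parse S bs) {F : List (List α)}
    (hF : IsCopyParse [] F) (hFS : F.flatten = S) (t : ℕ) :
    ((F.take t).flatten).length ≤ ((bs.take t).flatten).length := by
  induction t with
  | zero => simp
  | succ t ih =>
    have hFpre : ∀ n, (F.take n).flatten <+: S := fun n => hFS ▸ (F.take_prefix n).flatten
    rcases lt_or_ge t bs.length with hbt | hbt
    swap
    · rw [List.take_of_length_le (by omega : bs.length ≤ t + 1), h.1]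
      exact (hFpre _).length_le
    rw [List.flatten_take_add_one hbt]
    rcases lt_or_ge t F.length with hFt | hFt
    swap
    · rw [List.take_of_length_le (by omega : F.length ≤ t + 1), ← List.take_of_length_le hFt]
      exact ih.trans (List.prefix_append _ _).length_le
    rw [List.flatten_take_add_one hFt]
    by_contra! hlt
    have hFpre' := List.flatten_take_add_one hFt ▸ hFpre (t + 1)
    have hBpre' := List.flatten_take_add_one hbt ▸ h.flatten_take_prefix (t + 1)
    have hAB := List.prefix_of_prefix_length_le (hFpre t) (h.flatten_take_prefix t) ih
    obtain ⟨hinside, hshorter⟩ := List.infix_of_append_prefix_append hAB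
      (List.prefix_of_prefix_length_le hBpre' hFpre' hlt.le) hlt
    have hcopy : F[t] <:+: (F.take t).flatten := by
      have := List.length_pos_iff.mpr (h.2.1 _ (List.getElem_mem hbt))
      simpa [show F[t].length ≠ 1 by omega] using hF.getElem hFt
    rcases h.greedy hbt with hend | hnew
    · have := hFpre'.length_le
      omega
    · exact hnew (hinside.trans (hcopy.trans hAB.isInfix))

theorem length_le_of_isCopyParse (h : LZ77Parse S bs) {F : List (List α)}
    (hF : IsCopyParse [] F) (hFS : F.flatten = S) : bs.length ≤ F.length := by
  by_contra! hlt
  have hS := h.length_flatten_take_le_of_isCopyParse hF hFS F.length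
  rw [List.take_of_length_le le_rfl, hFS] at hS
  have hext := (h.flatten_take_prefix (F.length + 1)).length_le
  rw [List.flatten_take_add_one hlt, List.length_append] at hext
  have := List.length_pos_iff.mpr (h.2.1 _ (List.getElem_mem hlt))
  omega

end LZ77Parse

namespace SLP

variable {G : SLP α}

lemma exp_of_rhs_eq_inr {i : Fin G.r} {a : α} (h : G.rhs i = Sum.inr a) : G.exp i = [a] := by
  rw [SLP.exp]
  split <;> simp_all

lemma exp_of_rhs_eq_inl {i j k : Fin G.r} (h : G.rhs i = Sum.inl (j, k)) :
    G.exp i = G.exp j ++ G.exp k := by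
  rw [SLP.exp]
  split <;> simp_all

/-- `seen` holds the binary nonterminals expanded so far. Those added while expanding `i` have
indices in `(0, i]`: this keeps `i` from being expanded twice and bounds the final count by `i`. -/
theorem exists_isCopyParse_of_forall_infix (G : SLP α) (i : Fin G.r) (seen : Finset (Fin G.r))
    (pre : List α) (hseen : ∀ x ∈ seen, G.exp x <:+: pre) :
    ∃ (F : List (List α)) (seen' : Finset (Fin G.r)),
      IsCopyParse pre F ∧ F.flatten = G.exp i ∧ (∀ x ∈ seen', G.exp x <:+: pre ++ G.exp i) ∧
      (∀ x ∈ seen', x ∈ seen ∨ 0 < x.val ∧ x ≤ i) ∧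
      F.length + seen.card ≤ seen'.card + 1 := by
  induction i using WellFoundedLT.induction generalizing seen pre with
  | _ i ih =>
  have hseen_ext : ∀ x ∈ seen, G.exp x <:+: pre ++ G.exp i :=
    fun x hx => (hseen x hx).trans (List.prefix_append _ _).isInfix
  by_cases hi : i ∈ seen
  · refine ⟨[G.exp i], seen, ?_, by simp, hseen_ext, fun x hx => .inl hx, by simp [add_comm]⟩
    simpa using .inr (hseen i hi)
  rcases hrhs : G.rhs i with ⟨j, k⟩ | a
  swap
  · exact ⟨[[a]], seen, by simp, by simp [exp_of_rhs_eq_inr hrhs], hseen_ext,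
      fun x hx => .inl hx, by simp [add_comm]⟩
  obtain ⟨hj, hk⟩ := G.wf i j k hrhs
  have hexp := exp_of_rhs_eq_inl hrhs
  obtain ⟨F₁, s₁, hF₁, hflat₁, hclosed₁, hnew₁, hcard₁⟩ := ih j hj seen pre hseen
  obtain ⟨F₂, s₂, hF₂, hflat₂, hclosed₂, hnew₂, hcard₂⟩ := ih k hk s₁ (pre ++ G.exp j) hclosed₁
  have hnew : ∀ x ∈ s₂, x ∈ seen ∨ 0 < x.val ∧ x < i := by
    intro x hx
    rcases hnew₂ x hx with hx₁ | ⟨hx0, hxk⟩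
    · rcases hnew₁ x hx₁ with hx' | ⟨hx0, hxj⟩
      exacts [.inl hx', .inr ⟨hx0, hxj.trans_lt hj⟩]
    · exact .inr ⟨hx0, hxk.trans_lt hk⟩
  have hi₂ : i ∉ s₂ := fun hi₂ => (hnew i hi₂).elim hi fun h => lt_irrefl i h.2
  refine ⟨F₁ ++ F₂, insert i s₂, isCopyParse_append.mpr ⟨hF₁, hflat₁ ▸ hF₂⟩,
    by simp [hflat₁, hflat₂, hexp], ?_, ?_, ?_⟩
  · simp only [Finset.mem_insert, forall_eq_or_imp]
    exact ⟨(List.suffix_append _ _).isInfix, fun x hx => by simpa [hexp] using hclosed₂ x hx⟩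
  · simp only [Finset.mem_insert, forall_eq_or_imp]
    exact ⟨.inr ⟨by omega, le_rfl⟩, fun x hx => (hnew x hx).imp_right fun h => ⟨h.1, h.2.le⟩⟩
  · rw [Finset.card_insert_of_notMem hi₂, List.length_append]
    omega

theorem exists_isCopyParse_length_le (G : SLP α) (i : Fin G.r) :
    ∃ F : List (List α), IsCopyParse [] F ∧ F.flatten = G.exp i ∧ F.length ≤ i.val + 1 := by
  obtain ⟨F, seen, hF, hflat, -, hnew, hcard⟩ :=
    G.exists_isCopyParse_of_forall_infix i ∅ [] (by simp)
  have hseen : seen.card ≤ (Finset.Ioc 0 i.val).card := by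
    refine Finset.card_le_card_of_injOn (fun x : Fin G.r => x.val) (fun x hx => ?_)
      Fin.val_injective.injOn
    simpa using hnew x hx
  simp only [Finset.card_empty, add_zero, Nat.card_Ioc, Nat.sub_zero] at hcard hseen
  exact ⟨F, hF, hflat, by omega⟩

end SLP

end

/-- Any SLP generating `S` has at least as many rules as the number of phrases
in the LZ77 parse of `S`. -/
theorem slp_rules_ge_lz77_phrases {α : Type*} (G : SLP α) (start : Fin G.r)
    (S : List α) (bs : List (List α)) (hS : G.exp start = S)
    (h : LZ77Parse S bs) :
    bs.length ≤ G.r := by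
  obtain ⟨F, hF, hflat, hlen⟩ := G.exists_isCopyParse_length_le start
  calc bs.length ≤ F.length := h.length_le_of_isCopyParse hF (hflat.trans hS)
    _ ≤ G.r := by omega
end
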